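/- arXiv:1501.07478 — 2 statements merged into one kernel-verified Lean document; each statement's English description precedes it below -/
import Mathlib

section
/- If π_m(k,n) denotes the number of overpartitions counted by G(-A'_N;k,n) with largest part at most m and overlined, and φ_m(k,n) the number with largest part at most m and non-overlined, then π_m(k-1, n) = φ_m(k, n) for all m, k ≥ 1, n. -/
/-! Overlining or un-overlining the largest part is an involution on overpartitions that preserves
membership in `G(-A'_N)`: both the overpartition condition and the difference conditions bound a
part only in terms of the value of the part above it, and the largest part has no part above it.
The involution keeps the size and the largest part and changes the number of non-overlined parts
by one. -/

open Finset

/-- An overpartition is encoded as a list of pairs `(part, overlined?)`: parts are positive,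
values are non-increasing, and an overlined part must be the first occurrence of its value. -/
def IsOverpartition (l : List (ℕ × Bool)) : Prop :=
  (∀ p ∈ l, 0 < p.1) ∧
  l.Chain' (fun p s => s.1 ≤ p.1 ∧ (s.2 = true → s.1 < p.1))

/-- The sum of the parts of an overpartition. -/
def opSum (l : List (ℕ × Bool)) : ℕ := (l.map Prod.fst).sum

/-- The number of non-overlined parts of an overpartition. -/
def opFree (l : List (ℕ × Bool)) : ℕ := (l.filter (fun p => p.2 = false)).length

/-- `betaN N m` is the least positive residue of `m` modulo `N`. -/
def betaN (N : ℕ) (m : ℤ) : ℤ := if m % N = 0 then (N : ℤ) else m % N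

/-- The subset of `{a(1),…,a(r)}` (given by its index set) whose sum is `x`, when `x` is one of
the `2^r - 1` subset sums `α`; junk value `∅` otherwise. -/
noncomputable def subsetOf (r : ℕ) (a : Fin r → ℕ) (x : ℤ) : Finset (Fin r) :=
  if h : ∃ S : Finset (Fin r), S.Nonempty ∧ (∑ i ∈ S, (a i : ℤ)) = x then h.choose else ∅

/-- `wOf r a α` is the number of summands in the defining sum of `α`. -/
noncomputable def wOf (r : ℕ) (a : Fin r → ℕ) (x : ℤ) : ℕ := (subsetOf r a x).card

/-- `vOf r a α` is the smallest `a(i)` appearing in the defining sum of `α`. -/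
noncomputable def vOf (r : ℕ) (a : Fin r → ℕ) (x : ℤ) : ℕ :=
  WithTop.untopD 0 ((subsetOf r a x).image a).min

/-- `x` belongs to `-A_N`: `x ≡ -a(i) (mod N)` for some `i`. -/
def InNegA (r N : ℕ) (a : Fin r → ℕ) (x : ℕ) : Prop :=
  ∃ i : Fin r, ((x : ℤ) + a i) % N = 0

/-- `x` belongs to `-A'_N`: `x ≡ -α(i) (mod N)` for some subset sum `α(i)`. -/
def InNegA' (r N : ℕ) (a : Fin r → ℕ) (x : ℕ) : Prop :=
  ∃ S : Finset (Fin r), S.Nonempty ∧ ((x : ℤ) + ∑ i ∈ S, (a i : ℤ)) % N = 0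

/-- `l` is an overpartition into parts from `-A_N` (counted by `F(-A_N; k, n)`). -/
def IsF (r N : ℕ) (a : Fin r → ℕ) (l : List (ℕ × Bool)) : Prop :=
  IsOverpartition l ∧ ∀ p ∈ l, InNegA r N a p.1

/-- `l` is an overpartition into parts from `-A'_N` satisfying the difference conditions
`λ_i - λ_{i+1} ≥ N·w(β_N(λ_{i+1}) - 1 + χ(λ_{i+1} overlined)) + v(β_N(λ_{i+1})) - β_N(λ_{i+1})`
and `λ_s ≥ N(w(β_N(-λ_s)) - 1)` (counted by `G(-A'_N; k, n)`). -/
noncomputable def IsG (r N : ℕ) (a : Fin r → ℕ) (l : List (ℕ × Bool)) : Prop :=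
  IsOverpartition l ∧ (∀ p ∈ l, InNegA' r N a p.1) ∧
  l.Chain' (fun p s =>
    (N : ℤ) * wOf r a (betaN N s.1 - 1 + (if s.2 then 1 else 0))
      + vOf r a (betaN N s.1) - betaN N s.1 ≤ (p.1 : ℤ) - s.1) ∧
  (∀ h : l ≠ [], (N : ℤ) * ((wOf r a (betaN N (-((l.getLast h).1 : ℤ))) : ℤ) - 1)
      ≤ ((l.getLast h).1 : ℤ))

def toggleHead : List (ℕ × Bool) → List (ℕ × Bool)
  | [] => []
  | (x, b) :: t => (x, !b) :: t

theorem toggleHead_involutive : Function.Involutive toggleHead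
  | [] => rfl
  | (x, b) :: t => by simp [toggleHead]

theorem opSum_toggleHead (l : List (ℕ × Bool)) : opSum (toggleHead l) = opSum l := by
  cases l <;> simp [toggleHead, opSum]

theorem opFree_cons (p : ℕ × Bool) (t : List (ℕ × Bool)) :
    opFree (p :: t) = opFree t + if p.2 then 0 else 1 := by
  cases p with
  | mk x b => cases b <;> simp [opFree]

theorem isChain_toggleHead_iff {R : ℕ × Bool → ℕ × Bool → Prop}
    (hR : ∀ x b b' s, R (x, b) s ↔ R (x, b') s) (l : List (ℕ × Bool)) :
    (toggleHead l).IsChain R ↔ l.IsChain R := by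
  rcases l with _ | ⟨⟨x, b⟩, t⟩
  · rfl
  · simp only [toggleHead, List.isChain_cons, hR x (!b) b]

theorem forall_getLast_toggleHead_iff {P : ℕ → Prop} (l : List (ℕ × Bool)) :
    (∀ h : toggleHead l ≠ [], P ((toggleHead l).getLast h).1) ↔
      ∀ h : l ≠ [], P (l.getLast h).1 := by
  rcases l with _ | ⟨⟨_, _⟩, _ | ⟨_, _⟩⟩ <;> simp [toggleHead]

theorem forall_mem_toggleHead_iff {l : List (ℕ × Bool)} {P : ℕ → Prop} :
    (∀ p ∈ toggleHead l, P p.1) ↔ ∀ p ∈ l, P p.1 := by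
  rcases l with _ | ⟨⟨_, _⟩, _⟩ <;> simp [toggleHead]

theorem isOverpartition_toggleHead_iff (l : List (ℕ × Bool)) :
    IsOverpartition (toggleHead l) ↔ IsOverpartition l := by
  unfold IsOverpartition
  rw [forall_mem_toggleHead_iff (P := (0 < ·)), List.Chain', List.Chain',
    isChain_toggleHead_iff fun _ _ _ _ => Iff.rfl]

theorem isG_toggleHead_iff (r N : ℕ) (a : Fin r → ℕ) (l : List (ℕ × Bool)) :
    IsG r N a (toggleHead l) ↔ IsG r N a l := by
  unfold IsG
  rw [isOverpartition_toggleHead_iff, forall_mem_toggleHead_iff (P := InNegA' r N a), List.Chain',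
    List.Chain', isChain_toggleHead_iff fun _ _ _ _ => Iff.rfl]
  exact Iff.rfl.and <| Iff.rfl.and <| Iff.rfl.and <| forall_getLast_toggleHead_iff
    (P := fun y : ℕ => (N : ℤ) * ((wOf r a (betaN N (-(y : ℤ))) : ℤ) - 1) ≤ y) l

theorem pi_eq_phi_general
    (r N : ℕ) (a : Fin r → ℕ)
    (m : ℕ) (k : ℕ) (hk : 1 ≤ k) (n : ℕ) :
    Nat.card {l : List (ℕ × Bool) // IsG r N a l ∧ opFree l = k - 1 ∧ opSum l = n ∧
        ∃ h : l ≠ [], (l.head h).2 = true ∧ (l.head h).1 ≤ m}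
      = Nat.card {l : List (ℕ × Bool) // IsG r N a l ∧ opFree l = k ∧ opSum l = n ∧
          ∃ h : l ≠ [], (l.head h).2 = false ∧ (l.head h).1 ≤ m} := by
  refine Nat.card_congr (toggleHead_involutive.toPerm _ |>.subtypeEquiv fun l => ?_)
  rw [Function.Involutive.coe_toPerm, isG_toggleHead_iff, opSum_toggleHead]
  rcases l with _ | ⟨⟨_, _ | _⟩, t⟩
  · simp [toggleHead]
  · simp [toggleHead, opFree_cons]
  · simp only [toggleHead, opFree_cons, Bool.not_true, ite_true, add_zero]
    have hfree : opFree t = k - 1 ↔ opFree t + 1 = k := by omega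
    simp [hfree]

/-- If `π_m(k,n)` counts the overpartitions counted by `G(-A'_N;k,n)` with largest part at most
`m` and overlined, and `φ_m(k,n)` those with largest part at most `m` and non-overlined, then
`π_m(k-1, n) = φ_m(k, n)` for all `m`, `k ≥ 1`, `n`: the bijection overlines or un-overlines
the largest part. -/
theorem pi_eq_phi
    (r N : ℕ) (a : Fin r → ℕ)
    (hpos : ∀ i, 0 < a i) (hmono : StrictMono a)
    (hgrow : ∀ k : Fin r, ∑ i ∈ Finset.univ.filter (· < k), a i < a k)
    (hdistinct : ∀ S T : Finset (Fin r), S.Nonempty → T.Nonempty →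
      (∑ i ∈ S, a i) = ∑ i ∈ T, a i → S = T)
    (hN : (∑ i, a i) ≤ N)
    (m : ℕ) (k : ℕ) (hk : 1 ≤ k) (n : ℕ) :
    Nat.card {l : List (ℕ × Bool) // IsG r N a l ∧ opFree l = k - 1 ∧ opSum l = n ∧
        ∃ h : l ≠ [], (l.head h).2 = true ∧ (l.head h).1 ≤ m}
      = Nat.card {l : List (ℕ × Bool) // IsG r N a l ∧ opFree l = k ∧ opSum l = n ∧
          ∃ h : l ≠ [], (l.head h).2 = false ∧ (l.head h).1 ≤ m} :=
  pi_eq_phi_general r N a m k hk n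
end

section
/- (Appell's Comparison Theorem.) If (β_m) is a sequence of complex numbers such that β_m converges to a limit L as m → ∞, then lim_{x → 1^-} (1-x) ∑_{m=0}^{∞} β_m x^m = L. -/
/-!
Apply Abel's limit theorem to the differences `Δβ_0 = β_0`, `Δβ_{m+1} = β_{m+1} - β_m`: their
partial sums are the `β_n`, which tend to `L`, and for `|x| < 1` shifting the index gives
`(1 - x) ∑ β_m x^m = ∑ Δβ_m x^m`.
-/

open Filter Finset Asymptotics

def firstDiff {R : Type*} [AddGroup R] (β : ℕ → R) : ℕ → R
  | 0 => β 0
  | n + 1 => β (n + 1) - β n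

section firstDiff

variable {R : Type*}

theorem sum_range_succ_firstDiff [AddCommGroup R] (β : ℕ → R) (n : ℕ) :
    ∑ i ∈ range (n + 1), firstDiff β i = β n := by
  induction n with
  | zero => simp [firstDiff]
  | succ n ih => rw [sum_range_succ, ih, firstDiff, add_sub_cancel]

theorem tendsto_sum_range_firstDiff [AddCommGroup R] [TopologicalSpace R] {β : ℕ → R} {L : R}
    (h : Tendsto β atTop (nhds L)) :
    Tendsto (fun n => ∑ i ∈ range n, firstDiff β i) atTop (nhds L) := by
  rw [← tendsto_add_atTop_iff_nat 1]
  simpa only [sum_range_succ_firstDiff] using h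

theorem HasSum.firstDiff_mul_pow [Ring R] [TopologicalSpace R] [IsTopologicalRing R]
    {β : ℕ → R} {z S : R} (h : HasSum (fun m => β m * z ^ m) S) :
    HasSum (fun m => firstDiff β m * z ^ m) (S * (1 - z)) := by
  rw [← hasSum_nat_add_iff' 1]
  have shifted : HasSum (fun m => β (m + 1) * z ^ (m + 1)) (S - β 0) := by
    simpa using (hasSum_nat_add_iff' 1).mpr h
  convert shifted.sub (h.mul_right z) using 1
  · ext m
    simp only [firstDiff, sub_mul, pow_succ, mul_assoc]
  · simp only [range_one, sum_singleton, firstDiff, pow_zero, mul_one, mul_sub]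
    abel

end firstDiff

theorem summable_mul_pow_of_isBigO_one {R : Type*} [NormedRing R] [CompleteSpace R]
    {β : ℕ → R} (hβ : β =O[atTop] fun _ => (1 : ℝ)) {z : R} (hz : ‖z‖ < 1) :
    Summable fun m => β m * z ^ m := by
  refine summable_of_isBigO_nat (summable_geometric_of_lt_one (norm_nonneg z) hz) ?_
  have hpow : (fun m => z ^ m) =O[atTop] fun m => ‖z‖ ^ m := by
    refine IsBigO.of_bound 1 ((eventually_gt_atTop 0).mono fun m hm => ?_)
    simpa using norm_pow_le' z hm
  simpa using hβ.mul hpow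

/-- Appell's Comparison Theorem: if `β_m → L` as `m → ∞`, then
`lim_{x → 1⁻} (1 - x) ∑_{m=0}^{∞} β_m x^m = L`, the limit being taken as the real number `x`
tends to `1` from below. -/
theorem appell_comparison (β : ℕ → ℂ) (L : ℂ) (h : Tendsto β atTop (nhds L)) :
    Tendsto (fun x : ℝ => ((1 : ℂ) - x) * ∑' m : ℕ, β m * (x : ℂ) ^ m)
      (nhdsWithin 1 (Set.Iio 1)) (nhds L) := by
  have abel := Complex.tendsto_tsum_powerSeries_nhdsWithin_lt (tendsto_sum_range_firstDiff h)
  rw [tendsto_map'_iff] at abel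
  refine abel.congr' ?_
  filter_upwards [Ioo_mem_nhdsLT (neg_lt_self one_pos)] with x hx
  have hnorm : ‖(x : ℂ)‖ < 1 := by
    rw [Complex.norm_real, Real.norm_eq_abs, abs_lt]
    exact hx
  rw [mul_comm]
  exact ((summable_mul_pow_of_isBigO_one (h.isBigO_one ℝ) hnorm).hasSum.firstDiff_mul_pow).tsum_eq
end
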